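/- arXiv:2006.03827 — 4 statements merged into one kernel-verified Lean document; each statement's English description precedes it below -/
import Mathlib

section
/- Let ω ⊂ ℝ² be a bounded open set with 0 ∈ ω, and define for a finite signed measure μ the norm ‖μ‖ := sup { ∫ φ dμ : φ ∈ W₀^{1,∞}(ω), ‖φ‖_∞ ≤ 1, ‖Dφ‖_∞ ≤ 1 }. Then there exists r > 0 (any r ≤ min{½ dist(0, ∂ω), 1} works) such that for all points a₁,…,aₙ and b₁,…,bₙ in the ball B(0,r), one has ‖∑_{i=1}^n δ_{a_i} − ∑_{i=1}^n δ_{b_i}‖ = min over permutations σ ∈ Sₙ of ∑_{i=1}^n |a_i − b_{σ(i)}|. -/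
/-!
Testing a 1-Lipschitz `φ` against any matching `σ` gives
`∑ φ (a i) - ∑ φ (b i) ≤ ∑ |a i - b (σ i)|`. Conversely, for an optimal matching (reindexed to be
`i ↦ i`) the reduced costs `w i j = |a i - b j| - |a i - b i|` have no negative cycles, since a
cycle is a permutation. Least weights of simple walks are then potentials with
`p i ≤ w i j + p j`, and `ψ x = min_j (|x - b j| + p j)` is 1-Lipschitz with
`ψ (a i) - ψ (b i) ≥ |a i - b i|`. Normalised by `ψ 0 = 0` we get `|ψ x| ≤ |x|`, so clamping `ψ`
between `± min 1 (dist(x, ωᶜ))` yields an admissible test function which still equals `ψ` on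
`B(0, r)` as soon as `r ≤ min 1 (dist(0, ωᶜ) / 2)`.
-/

open Finset

section Potentials

variable {ι G : Type*}

lemma List.map_formPerm_eq_rotate [DecidableEq ι] {l : List ι} (hl : l.Nodup) :
    l.map l.formPerm = l.rotate 1 :=
  List.ext_getElem (by simp) fun k _ _ => by
    simp [List.formPerm_apply_getElem _ hl, List.getElem_rotate]

def walkWeight [AddMonoid G] (w : ι → ι → G) : ι → List ι → G
  | _, [] => 0
  | i, j :: l => w i j + walkWeight w j l

section AddCommMonoid

variable [AddCommMonoid G] (w : ι → ι → G)

@[simp]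
lemma walkWeight_nil (i : ι) : walkWeight w i [] = 0 := rfl

@[simp]
lemma walkWeight_cons (i j : ι) (l : List ι) :
    walkWeight w i (j :: l) = w i j + walkWeight w j l := rfl

lemma walkWeight_append_cons (i j : ι) (l₁ l₂ : List ι) :
    walkWeight w i (l₁ ++ j :: l₂) = walkWeight w i (l₁ ++ [j]) + walkWeight w j l₂ := by
  induction l₁ generalizing i with
  | nil => simp
  | cons k l₁ ih => simp [ih, add_assoc]

lemma walkWeight_eq_sum_zipWith (i : ι) (l : List ι) :
    walkWeight w i l = (List.zipWith w (i :: l) l).sum := by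
  induction l generalizing i with
  | nil => simp
  | cons j l ih => simp [ih]

lemma sum_apply_formPerm_eq_walkWeight [Fintype ι] [DecidableEq ι] (hw : ∀ i, w i i = 0)
    {i : ι} {l : List ι} (hl : (i :: l).Nodup) :
    ∑ x, w x ((i :: l).formPerm x) = walkWeight w i (l ++ [i]) := by
  have hsupp : ∑ x ∈ (i :: l).toFinset, w x ((i :: l).formPerm x)
      = ∑ x, w x ((i :: l).formPerm x) :=
    sum_subset (subset_univ _) fun x _ hx => by
      rw [List.formPerm_apply_of_notMem (by simpa using hx), hw]
  have hmap : (i :: l).map (fun x => w x ((i :: l).formPerm x))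
      = List.zipWith w (i :: l) (l ++ [i]) := by
    rw [← List.rotate_zero (l ++ [i]), ← List.rotate_cons_succ, ← List.map_formPerm_eq_rotate hl,
      List.zipWith_map_right, List.zipWith_self]
  rw [← hsupp, List.sum_toFinset _ hl, hmap, walkWeight_eq_sum_zipWith, ← List.cons_append,
    ← List.append_nil (l ++ [i]), List.zipWith_append (by simp)]
  simp

end AddCommMonoid

variable [Fintype ι] [DecidableEq ι]

section LinearOrder

variable [AddCommMonoid G] [LinearOrder G] (w : ι → ι → G)

lemma walkWeight_cycle_nonneg (hw : ∀ i, w i i = 0)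
    (hperm : ∀ τ : Equiv.Perm ι, 0 ≤ ∑ i, w i (τ i)) {i : ι} {l : List ι} (hl : (i :: l).Nodup) :
    0 ≤ walkWeight w i (l ++ [i]) :=
  sum_apply_formPerm_eq_walkWeight w hw hl ▸ hperm _

/-- Simple walks from `i` are encoded as duplicate-free lists with head `i`. -/
noncomputable def minWalkWeight (i : ι) : G :=
  (univ.filter fun l : {l : List ι // l.Nodup} => l.1.head? = some i).inf'
    ⟨⟨[i], List.nodup_singleton i⟩, by simp⟩ fun l => walkWeight w i l.1.tail

lemma minWalkWeight_le {i : ι} {l : List ι} (hl : (i :: l).Nodup) :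
    minWalkWeight w i ≤ walkWeight w i l :=
  inf'_le (b := (⟨i :: l, hl⟩ : {l : List ι // l.Nodup})) _ (by simp)

lemma le_minWalkWeight {i : ι} {c : G}
    (h : ∀ l : List ι, (i :: l).Nodup → c ≤ walkWeight w i l) :
    c ≤ minWalkWeight w i :=
  le_inf' _ _ fun ⟨l, hl⟩ hmem => by
    obtain ⟨l, rfl⟩ := List.head?_eq_some_iff.1 (mem_filter.1 hmem).2
    exact h l hl

end LinearOrder

section OrderedGroup

variable [AddCommGroup G] [LinearOrder G] [IsOrderedAddMonoid G] (w : ι → ι → G)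

/-- With no negative cycles, a walk from `j` prolonged backwards by the edge `i → j` either is
simple or closes a cycle through `i`, which may be cut out without increasing the weight. -/
lemma minWalkWeight_le_add (hw : ∀ i, w i i = 0)
    (hperm : ∀ τ : Equiv.Perm ι, 0 ≤ ∑ i, w i (τ i)) (i j : ι) :
    minWalkWeight w i ≤ w i j + minWalkWeight w j := by
  rw [← sub_le_iff_le_add']
  refine le_minWalkWeight w fun l hl => sub_le_iff_le_add'.2 ?_
  by_cases hi : i ∈ j :: l
  · obtain ⟨l₁, l₂, hsplit⟩ := List.append_of_mem hi
    have hcycle : (i :: l₁).Nodup :=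
      (List.nodup_middle.1 (hsplit ▸ hl)).sublist ((List.sublist_append_left _ _).cons_cons i)
    have htail : (i :: l₂).Nodup := (hsplit ▸ hl).sublist (List.sublist_append_right _ _)
    calc minWalkWeight w i ≤ walkWeight w i l₂ := minWalkWeight_le w htail
      _ ≤ walkWeight w i (l₁ ++ [i]) + walkWeight w i l₂ :=
        le_add_of_nonneg_left (walkWeight_cycle_nonneg w hw hperm hcycle)
      _ = w i j + walkWeight w j l := by
        rw [← walkWeight_append_cons, ← hsplit, walkWeight_cons]
  · exact minWalkWeight_le w (List.nodup_cons.2 ⟨hi, hl⟩)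

theorem exists_potential_of_sum_perm_nonneg (hw : ∀ i, w i i = 0)
    (hperm : ∀ τ : Equiv.Perm ι, 0 ≤ ∑ i, w i (τ i)) :
    ∃ p : ι → G, ∀ i j, p i ≤ w i j + p j :=
  ⟨minWalkWeight w, minWalkWeight_le_add w hw hperm⟩

end OrderedGroup

end Potentials

open Metric

section Duality

variable {α ι : Type*} [PseudoMetricSpace α] [Fintype ι]

lemma LipschitzWith.finset_inf' {κ : Type*} {K : NNReal} {s : Finset κ} (hs : s.Nonempty)
    {f : κ → α → ℝ} (hf : ∀ k ∈ s, LipschitzWith K (f k)) :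
    LipschitzWith K fun x => s.inf' hs fun k => f k x := by
  refine LipschitzWith.of_le_add_mul K fun x y => ?_
  obtain ⟨k, hk, hy⟩ := exists_mem_eq_inf' hs fun k => f k y
  rw [hy]
  exact (inf'_le _ hk).trans ((hf k hk).le_add_mul x y)

lemma sum_sub_sum_le_sum_dist {φ : α → ℝ} (hφ : LipschitzWith 1 φ) (a b : ι → α)
    (σ : Equiv.Perm ι) : ∑ i, φ (a i) - ∑ i, φ (b i) ≤ ∑ i, dist (a i) (b (σ i)) := by
  rw [← Equiv.sum_comp σ fun i => φ (b i), ← sum_sub_distrib]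
  refine sum_le_sum fun i _ => ?_
  exact sub_le_iff_le_add'.2 (by simpa using hφ.le_add_mul (a i) (b (σ i)))

lemma exists_lipschitz_sum_dist_le {a b : ι → α}
    (hopt : ∀ τ : Equiv.Perm ι, ∑ i, dist (a i) (b i) ≤ ∑ i, dist (a i) (b (τ i))) :
    ∃ ψ : α → ℝ, LipschitzWith 1 ψ ∧ ∑ i, dist (a i) (b i) ≤ ∑ i, ψ (a i) - ∑ i, ψ (b i) := by
  classical
  cases isEmpty_or_nonempty ι
  · exact ⟨fun _ => 0, LipschitzWith.const' 0, by simp⟩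
  obtain ⟨p, hp⟩ := exists_potential_of_sum_perm_nonneg
    (fun i j => dist (a i) (b j) - dist (a i) (b i)) (by simp) fun τ => by
      simpa [sum_sub_distrib] using hopt τ
  set ψ : α → ℝ := fun x => univ.inf' univ_nonempty fun j => dist x (b j) + p j
  have hψa : ∀ i, dist (a i) (b i) + p i ≤ ψ (a i) := fun i =>
    le_inf' _ _ fun j _ => by linarith [hp i j]
  have hψb : ∀ i, ψ (b i) ≤ p i := fun i => by
    simpa using inf'_le (fun j => dist (b i) (b j) + p j) (mem_univ i)
  refine ⟨ψ, LipschitzWith.finset_inf' _ fun j _ => ?_, ?_⟩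
  · simpa using (LipschitzWith.dist_left (b j)).add (LipschitzWith.const' (K := 0) (p j))
  have := sum_le_sum fun i (_ : i ∈ univ) => hψa i
  have := sum_le_sum fun i (_ : i ∈ univ) => hψb i
  rw [sum_add_distrib] at *
  linarith

lemma exists_lipschitz_sum_sub_sum_eq_iInf (a b : ι → α) (x₀ : α) :
    ∃ ψ : α → ℝ, LipschitzWith 1 ψ ∧ ψ x₀ = 0 ∧
      ∑ i, ψ (a i) - ∑ i, ψ (b i) = ⨅ σ : Equiv.Perm ι, ∑ i, dist (a i) (b (σ i)) := by
  classical
  obtain ⟨σ₀, hσ₀⟩ :=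
    exists_eq_ciInf_of_finite (f := fun σ : Equiv.Perm ι => ∑ i, dist (a i) (b (σ i)))
  have hopt : ∀ τ : Equiv.Perm ι,
      ∑ i, dist (a i) (b (σ₀ i)) ≤ ∑ i, dist (a i) (b (σ₀ (τ i))) := fun τ =>
    hσ₀ ▸ ciInf_le (Set.finite_range _).bddBelow (σ₀ * τ)
  obtain ⟨ψ, hψ, hle⟩ := exists_lipschitz_sum_dist_le hopt
  set ψ₀ : α → ℝ := fun x => ψ x - ψ x₀
  have hψ₀ : LipschitzWith 1 ψ₀ := by simpa using hψ.sub (LipschitzWith.const' (K := 0) (ψ x₀))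
  have hsum : ∑ i, ψ₀ (a i) - ∑ i, ψ₀ (b i) = ∑ i, ψ (a i) - ∑ i, ψ (b (σ₀ i)) := by
    simp [ψ₀, sum_sub_distrib, Equiv.sum_comp σ₀ fun i => ψ (b i)]
  refine ⟨ψ₀, hψ₀, sub_self _, le_antisymm ?_ ?_⟩
  · exact le_ciInf (sum_sub_sum_le_sum_dist hψ₀ a b)
  · exact hσ₀ ▸ hsum ▸ hle

lemma exists_lipschitz_abs_le_one_eq_zero_of_mem (s : Set α) {ψ : α → ℝ}
    (hψ : LipschitzWith 1 ψ) :
    ∃ φ : α → ℝ, LipschitzWith 1 φ ∧ (∀ x, |φ x| ≤ 1) ∧ (∀ x ∈ s, φ x = 0) ∧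
      ∀ x, |ψ x| ≤ min 1 (infDist x s) → φ x = ψ x := by
  set g : α → ℝ := fun x => min 1 (infDist x s)
  have hg : LipschitzWith 1 g := by
    simpa using (LipschitzWith.const' (K := 0) (1 : ℝ)).min (lipschitz_infDist_pt s)
  have hg0 : ∀ x, 0 ≤ g x := fun x => le_min zero_le_one infDist_nonneg
  refine ⟨fun x => max (-g x) (min (ψ x) (g x)), by simpa using hg.neg.max (hψ.min hg),
    fun x => abs_le.2 ⟨?_, ?_⟩, fun x hx => ?_, fun x hx => ?_⟩
  · exact (neg_le_neg (min_le_left _ _)).trans (le_max_left _ _)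
  · exact max_le (by linarith [hg0 x]) ((min_le_right _ _).trans (min_le_left _ _))
  · simp [g, infDist_zero_of_mem hx]
  · obtain ⟨hlo, hhi⟩ := abs_le.1 (hx : |ψ x| ≤ g x)
    exact (congrArg (max _) (min_eq_left hhi)).trans (max_eq_right hlo)

lemma dist_le_min_one_infDist {s : Set α} {x x₀ : α}
    (h : dist x x₀ < min 1 (infDist x₀ s / 2)) : dist x x₀ ≤ min 1 (infDist x s) := by
  have htriangle : infDist x₀ s ≤ infDist x s + dist x x₀ :=
    dist_comm x x₀ ▸ infDist_le_infDist_add_dist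
  have h₁ := h.trans_le (min_le_left _ _)
  have h₂ := h.trans_le (min_le_right _ _)
  exact le_min h₁.le (by linarith)

end Duality

open Set

/-- on a bounded open set `ω ∋ 0`, the `W^{-1,1}`-type dual norm of the
difference of two sums of `n` Dirac masses whose atoms lie in a small ball `B(0,r)`
equals the minimal matching distance between the two configurations. -/
theorem stmt1 (ω : Set (EuclideanSpace ℝ (Fin 2))) (hω : IsOpen ω)
    (hbdd : Bornology.IsBounded ω) (h0 : (0 : EuclideanSpace ℝ (Fin 2)) ∈ ω) :
    ∃ r > 0, ∀ (n : ℕ) (a b : Fin n → EuclideanSpace ℝ (Fin 2)),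
      (∀ i, a i ∈ Metric.ball (0 : EuclideanSpace ℝ (Fin 2)) r) →
      (∀ i, b i ∈ Metric.ball (0 : EuclideanSpace ℝ (Fin 2)) r) →
      sSup {s : ℝ | ∃ φ : EuclideanSpace ℝ (Fin 2) → ℝ, LipschitzWith 1 φ ∧
          (∀ x, |φ x| ≤ 1) ∧ (∀ x ∉ ω, φ x = 0) ∧
          s = (∑ i, φ (a i)) - ∑ i, φ (b i)}
        = ⨅ σ : Equiv.Perm (Fin n), ∑ i, dist (a i) (b (σ i)) := by
  have hne : ωᶜ.Nonempty := nonempty_compl.2 fun h => NormedSpace.unbounded_univ ℝ _ (h ▸ hbdd)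
  have hd : 0 < infDist 0 ωᶜ :=
    (hω.isClosed_compl.notMem_iff_infDist_pos hne).1 (not_not.2 h0)
  refine ⟨min 1 (infDist 0 ωᶜ / 2), lt_min one_pos (half_pos hd), fun n a b ha hb => ?_⟩
  obtain ⟨ψ, hψ, hψ0, hψsum⟩ := exists_lipschitz_sum_sub_sum_eq_iInf a b 0
  obtain ⟨φ, hφ, hφ1, hφω, hφψ⟩ := exists_lipschitz_abs_le_one_eq_zero_of_mem ωᶜ hψ
  have hφψ_ball : ∀ x ∈ ball 0 (min 1 (infDist 0 ωᶜ / 2)), φ x = ψ x := fun x hx =>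
    hφψ x <| (by simpa [hψ0, Real.dist_eq] using hψ.dist_le_mul x 0 : |ψ x| ≤ dist x 0).trans
      (dist_le_min_one_infDist hx)
  refine IsGreatest.csSup_eq ⟨⟨φ, hφ, hφ1, hφω, ?_⟩, ?_⟩
  · simp only [hφψ_ball _ (ha _), hφψ_ball _ (hb _), hψsum]
  · rintro s ⟨φ', hφ', -, -, rfl⟩
    exact le_ciInf (sum_sub_sum_le_sum_dist hφ' a b)
end

section
/- For x, a, a′ ∈ ℝ² with |x − a| ≥ 2|a − a′|, one has |(x − a)/|x − a|² − (x − a′)/|x − a′|²|² ≤ 4 |a − a′|²/|x − a|⁴. -/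
lemma kelvin_key {E : Type*} [NormedAddCommGroup E] [InnerProductSpace ℝ E]
    (u v : E) (hu : u ≠ 0) (hv : v ≠ 0) :
    ‖(‖u‖ ^ 2)⁻¹ • u - (‖v‖ ^ 2)⁻¹ • v‖ ^ 2 = ‖u - v‖ ^ 2 / (‖u‖ ^ 2 * ‖v‖ ^ 2) := by
  have hu' : ‖u‖ ≠ 0 := norm_ne_zero_iff.mpr hu
  have hv' : ‖v‖ ≠ 0 := norm_ne_zero_iff.mpr hv
  rw [norm_sub_sq_real, norm_sub_sq_real]
  simp only [norm_smul, inner_smul_left, inner_smul_right, real_inner_self_eq_norm_sq,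
    Real.norm_eq_abs, map_mul, conj_trivial, abs_inv, abs_pow, abs_norm]
  field_simp
  ring

/-- pointwise Kelvin-kernel estimate: if `|x−a| ≥ 2|a−a′|` then
`|(x−a)/|x−a|² − (x−a′)/|x−a′|²|² ≤ 4|a−a′|²/|x−a|⁴`. -/
theorem stmt3 (x a a' : EuclideanSpace ℝ (Fin 2))
    (h : 2 * ‖a - a'‖ ≤ ‖x - a‖) :
    ‖(‖x - a‖ ^ 2)⁻¹ • (x - a) - (‖x - a'‖ ^ 2)⁻¹ • (x - a')‖ ^ 2
      ≤ 4 * ‖a - a'‖ ^ 2 / ‖x - a‖ ^ 4 := by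
  by_cases ha : a = a'
  · subst ha
    simp
  have hd : 0 < ‖a - a'‖ := norm_pos_iff.mpr (sub_ne_zero.mpr ha)
  have hu : 0 < ‖x - a‖ := lt_of_lt_of_le (by linarith) h
  have hdiff : (x - a) - (x - a') = a' - a := by abel
  have hv : ‖x - a‖ - ‖a - a'‖ ≤ ‖x - a'‖ := by
    have := norm_sub_norm_le (x - a) (x - a')
    rw [hdiff, norm_sub_rev a' a] at this
    linarith [le_abs_self (‖x - a‖ - ‖x - a'‖)]
  have hv' : 0 < ‖x - a'‖ := by linarith
  rw [kelvin_key _ _ (norm_pos_iff.mp hu) (norm_pos_iff.mp hv'), hdiff,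
    norm_sub_rev a' a]
  rw [div_le_div_iff₀ (by positivity) (by positivity)]
  have h2 : ‖x - a‖ ≤ 2 * ‖x - a'‖ := by linarith
  have h3 : ‖x - a‖ ^ 2 ≤ 4 * ‖x - a'‖ ^ 2 := by nlinarith
  nlinarith [mul_le_mul_of_nonneg_left h3 (mul_nonneg (sq_nonneg ‖a - a'‖) (sq_nonneg ‖x - a‖))]
end

section
/- Let f ∈ H¹((0,L); (ℝ²)ⁿ) satisfy G₀(f) := π ∫₀^L ( ½|f′|² − ∑_{i≠j} log|f_i − f_j| ) dz ≤ c₂ and ∫₀^L ∑_i |f_i(z)| dz ≤ c₁. Then ‖f‖_{H¹((0,L))} ≤ C(c₁, c₂, n, L). -/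
noncomputable section

open MeasureTheory

/-- Configuration space of `n` planar points, with the ℓ²-product inner product. -/
abbrev Cfg (n : ℕ) := PiLp 2 (fun _ : Fin n => EuclideanSpace ℝ (Fin 2))

/-- The renormalized interaction energy `W(a) = −∑_{i≠j} log|a_i − a_j|`. -/
def Wc (n : ℕ) (a : Cfg n) : ℝ :=
  -∑ i, ∑ j, if i = j then (0 : ℝ) else Real.log (dist (a i) (a j))

/-
Since `log x ≤ x`, the logarithmic interaction is dominated pointwise by `2n ∑ᵢ |fᵢ|`, so the
energy bound and the `L¹` bound control `∫ |f'|²`. By the fundamental theorem of calculus,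
`|f(z)| ≤ |f(y)| + ∫ |f'|`; averaging in `y` bounds `sup |f|` by `c₁ / L + ∫ |f'|`, and
`∫ |f'| ≤ (L + ∫ |f'|²) / 2`. Finally `∫ |f|² ≤ sup |f| · ∫ |f|`.
-/

open Set

theorem PiLp.norm_le_sum_norm {ι : Type*} [Fintype ι] {β : ι → Type*}
    [∀ i, SeminormedAddCommGroup (β i)] (a : PiLp 2 β) : ‖a‖ ≤ ∑ i, ‖a i‖ := by
  have hsq : ‖a‖ ^ 2 ≤ (∑ i, ‖a i‖) ^ 2 := by
    rw [PiLp.norm_sq_eq_of_L2]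
    exact Finset.sum_sq_le_sq_sum_of_nonneg fun i _ => norm_nonneg _
  exact abs_le_of_sq_le_sq' hsq (Finset.sum_nonneg fun i _ => norm_nonneg _) |>.2

theorem neg_Wc_le_two_mul_sum_norm {n : ℕ} (a : Cfg n) :
    -Wc n a ≤ 2 * n * ∑ i, ‖a i‖ := by
  rw [Wc, neg_neg]
  calc (∑ i, ∑ j, if i = j then (0 : ℝ) else Real.log (dist (a i) (a j)))
      ≤ ∑ i, ∑ j : Fin n, (‖a i‖ + ‖a j‖) := by
        gcongr with i _ j _
        split_ifs
        · positivity
        · exact (Real.log_le_self dist_nonneg).trans (dist_le_norm_add_norm _ _)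
    _ = 2 * n * ∑ i, ‖a i‖ := by
        simp only [Finset.sum_add_distrib, Finset.sum_const, Finset.card_univ, Fintype.card_fin,
          nsmul_eq_mul, ← Finset.mul_sum]
        ring

section

variable {α : Type*} [MeasurableSpace α] {μ : Measure α} {s : Set α}

theorem setIntegral_le_half_measureReal_add_setIntegral_sq {u : α → ℝ} (hs : μ s ≠ ⊤)
    (hu : IntegrableOn u s μ) (hu2 : IntegrableOn (fun x => u x ^ 2) s μ) :
    ∫ x in s, u x ∂μ ≤ (μ.real s + ∫ x in s, u x ^ 2 ∂μ) / 2 := by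
  have hone : IntegrableOn (fun _ => (1 : ℝ)) s μ := integrableOn_const hs
  calc ∫ x in s, u x ∂μ ≤ ∫ x in s, (1 + u x ^ 2) / 2 ∂μ :=
        integral_mono hu ((hone.add hu2).div_const 2) fun x => by nlinarith [sq_nonneg (u x - 1)]
    _ = (μ.real s + ∫ x in s, u x ^ 2 ∂μ) / 2 := by
        rw [integral_div, integral_add hone hu2, setIntegral_const, smul_eq_mul, mul_one]

theorem setIntegral_sq_le_mul_setIntegral {u : α → ℝ} {M : ℝ} (hs : MeasurableSet s)
    (hu : IntegrableOn u s μ) (hu0 : ∀ x ∈ s, 0 ≤ u x) (huM : ∀ x ∈ s, u x ≤ M) :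
    ∫ x in s, u x ^ 2 ∂μ ≤ M * ∫ x in s, u x ∂μ := by
  rw [← integral_const_mul]
  refine integral_mono_of_nonneg (ae_of_all _ fun x => sq_nonneg _) (hu.const_mul M)
    (ae_restrict_of_forall_mem hs fun x hx => ?_)
  simpa only [sq] using mul_le_mul_of_nonneg_right (huM x hx) (hu0 x hx)

end

section

variable {E : Type*} [NormedAddCommGroup E] [NormedSpace ℝ E] [CompleteSpace E]
  {g : ℝ → E} {a b : ℝ}

theorem norm_le_norm_add_setIntegral_norm_deriv (hg : ContDiff ℝ 1 g) {y z : ℝ}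
    (hy : y ∈ Ioo a b) (hz : z ∈ Ioo a b) :
    ‖g z‖ ≤ ‖g y‖ + ∫ t in Ioo a b, ‖deriv g t‖ := by
  have hg' : Continuous (deriv g) := hg.continuous_deriv le_rfl
  have hftc : ∫ t in y..z, deriv g t = g z - g y :=
    intervalIntegral.integral_deriv_eq_sub
      (fun x _ => (hg.differentiable one_ne_zero).differentiableAt)
      (hg'.intervalIntegrable y z)
  have hsub : uIoc y z ⊆ Ioo a b := fun t ht => by
    rcases mem_uIoc.mp ht with ⟨h, h'⟩ | ⟨h, h'⟩ <;>
      exact ⟨by linarith [hy.1, hz.1], by linarith [hy.2, hz.2]⟩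
  calc ‖g z‖ ≤ ‖g y‖ + ‖g z - g y‖ := norm_le_insert' _ _
    _ ≤ ‖g y‖ + ∫ t in uIoc y z, ‖deriv g t‖ := by
        rw [← hftc]; gcongr; exact intervalIntegral.norm_integral_le_integral_norm_uIoc
    _ ≤ ‖g y‖ + ∫ t in Ioo a b, ‖deriv g t‖ :=
        add_le_add_right
          (setIntegral_mono_set ((hg'.norm.integrableOn_Icc).mono_set Ioo_subset_Icc_self)
            (ae_of_all _ fun t => norm_nonneg _) hsub.eventuallyLE) _

theorem norm_le_setIntegral_norm_div_add_setIntegral_norm_deriv (hg : ContDiff ℝ 1 g) {z : ℝ}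
    (hz : z ∈ Ioo a b) :
    ‖g z‖ ≤ (∫ t in Ioo a b, ‖g t‖) / (b - a) + ∫ t in Ioo a b, ‖deriv g t‖ := by
  have hab : 0 < b - a := sub_pos.2 (hz.1.trans hz.2)
  have hvol : volume (Ioo a b) ≠ ⊤ := by simp
  set K := ∫ t in Ioo a b, ‖deriv g t‖
  have hint : IntegrableOn (fun t => ‖g t‖) (Ioo a b) :=
    (hg.continuous.norm.integrableOn_Icc).mono_set Ioo_subset_Icc_self
  have havg : (b - a) * ‖g z‖ ≤ (∫ t in Ioo a b, ‖g t‖) + (b - a) * K := by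
    have : ∫ _ in Ioo a b, ‖g z‖ ≤ ∫ y in Ioo a b, (‖g y‖ + K) :=
      setIntegral_mono_on (integrableOn_const hvol) (hint.add (integrableOn_const hvol))
        measurableSet_Ioo fun y hy => norm_le_norm_add_setIntegral_norm_deriv hg hy hz
    rwa [integral_add hint (integrableOn_const hvol), setIntegral_const, setIntegral_const,
      Real.volume_real_Ioo_of_le (hz.1.trans hz.2).le, smul_eq_mul, smul_eq_mul] at this
  rw [div_add' _ _ _ hab.ne', le_div_iff₀ hab]
  linarith

end

theorem setIntegral_norm_deriv_sq_le_of_energy_le {n : ℕ} {f : ℝ → Cfg n} {s : Set ℝ}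
    {c₁ c₂ : ℝ} (hs : MeasurableSet s) (hD : IntegrableOn (fun z => ‖deriv f z‖ ^ 2) s)
    (hG : IntegrableOn (fun z => (1 / 2) * ‖deriv f z‖ ^ 2 + Wc n (f z)) s)
    (hsum : IntegrableOn (fun z => ∑ i, ‖f z i‖) s)
    (hGc : Real.pi * ∫ z in s, ((1 / 2) * ‖deriv f z‖ ^ 2 + Wc n (f z)) ≤ c₂)
    (hL1 : ∫ z in s, ∑ i, ‖f z i‖ ≤ c₁) :
    ∫ z in s, ‖deriv f z‖ ^ 2 ≤ 2 * (c₂ / Real.pi + 2 * n * c₁) := by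
  have hW : IntegrableOn (fun z => Wc n (f z)) s :=
    (hG.sub (hD.const_mul (1 / 2))).congr_fun (fun z _ => by simp) hs
  have hsplit : ∫ z in s, ((1 / 2) * ‖deriv f z‖ ^ 2 + Wc n (f z))
      = (1 / 2) * (∫ z in s, ‖deriv f z‖ ^ 2) + ∫ z in s, Wc n (f z) := by
    rw [integral_add (hD.const_mul _) hW, integral_const_mul]
  have hinteraction : -∫ z in s, Wc n (f z) ≤ 2 * n * c₁ :=
    calc -∫ z in s, Wc n (f z) = ∫ z in s, -Wc n (f z) := (integral_neg _).symm
      _ ≤ ∫ z in s, 2 * n * ∑ i, ‖f z i‖ :=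
          setIntegral_mono_on hW.neg (hsum.const_mul _) hs fun z _ => neg_Wc_le_two_mul_sum_norm _
      _ = 2 * n * ∫ z in s, ∑ i, ‖f z i‖ := integral_const_mul _ _
      _ ≤ 2 * n * c₁ := by gcongr
  have henergy : ∫ z in s, ((1 / 2) * ‖deriv f z‖ ^ 2 + Wc n (f z)) ≤ c₂ / Real.pi := by
    rw [le_div_iff₀ Real.pi_pos, mul_comm]; exact hGc
  linarith

/-- an `H¹` bound from the Hamiltonian bound `G₀(f) ≤ c₂` and the `L¹` bound
`∫ ∑_i |f_i| ≤ c₁`: `‖f‖_{H¹((0,L))}² ≤ C(c₁, c₂, n, L)`. -/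
theorem stmt14 (n : ℕ) (L c₁ c₂ : ℝ) (hL : 0 < L) :
    ∃ C > 0, ∀ f : ℝ → Cfg n,
      ContDiff ℝ 1 f →
      IntegrableOn (fun z => ‖deriv f z‖ ^ 2) (Set.Ioo 0 L) →
      IntegrableOn (fun z => (1 / 2) * ‖deriv f z‖ ^ 2 + Wc n (f z)) (Set.Ioo 0 L) →
      Real.pi * (∫ z in Set.Ioo 0 L, ((1 / 2) * ‖deriv f z‖ ^ 2 + Wc n (f z))) ≤ c₂ →
      (∫ z in Set.Ioo 0 L, ∑ i, ‖f z i‖) ≤ c₁ →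
      (∫ z in Set.Ioo 0 L, (‖f z‖ ^ 2 + ‖deriv f z‖ ^ 2)) ≤ C := by
  set B := 2 * (c₂ / Real.pi + 2 * n * c₁)
  set M := c₁ / L + (L + B) / 2
  refine ⟨max (M * c₁ + B) 1, lt_max_of_lt_right one_pos, fun f hf hD hG hGc hL1 => ?_⟩
  have hcont {u : ℝ → ℝ} (hu : Continuous u) : IntegrableOn u (Ioo 0 L) :=
    hu.integrableOn_Icc.mono_set Ioo_subset_Icc_self
  have hf1 : IntegrableOn (fun z => ‖f z‖) (Ioo 0 L) := hcont hf.continuous.norm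
  have hsum : IntegrableOn (fun z => ∑ i, ‖f z i‖) (Ioo 0 L) := hcont (by fun_prop)
  have hD2 : ∫ z in Ioo 0 L, ‖deriv f z‖ ^ 2 ≤ B :=
    setIntegral_norm_deriv_sq_le_of_energy_le measurableSet_Ioo hD hG hsum hGc hL1
  have hD1 : ∫ z in Ioo 0 L, ‖deriv f z‖ ≤ (L + B) / 2 := by
    have := setIntegral_le_half_measureReal_add_setIntegral_sq (by simp)
      (hcont (hf.continuous_deriv le_rfl).norm) hD
    rw [Real.volume_real_Ioo_of_le hL.le, sub_zero] at this
    linarith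
  have hf1c : ∫ z in Ioo 0 L, ‖f z‖ ≤ c₁ :=
    (setIntegral_mono_on hf1 hsum measurableSet_Ioo fun z _ => PiLp.norm_le_sum_norm _).trans hL1
  have hsup : ∀ z ∈ Ioo 0 L, ‖f z‖ ≤ M := fun z hz => by
    have := norm_le_setIntegral_norm_div_add_setIntegral_norm_deriv hf hz
    rw [sub_zero] at this
    show ‖f z‖ ≤ c₁ / L + (L + B) / 2
    linarith [div_le_div_of_nonneg_right hf1c hL.le]
  have hM : 0 ≤ M := (norm_nonneg _).trans (hsup (L / 2) ⟨half_pos hL, half_lt_self hL⟩)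
  have hf2 : ∫ z in Ioo 0 L, ‖f z‖ ^ 2 ≤ M * c₁ :=
    (setIntegral_sq_le_mul_setIntegral measurableSet_Ioo hf1 (fun _ _ => norm_nonneg _) hsup).trans
      (mul_le_mul_of_nonneg_left hf1c hM)
  rw [integral_add (hcont (u := fun z => ‖f z‖ ^ 2) (by fun_prop)) hD]
  exact le_max_of_le_left (by linarith)
end
end

section
/- Let n ≥ 1, ρ > 0, and suppose f, f⁰ : (0,L) → (ℝ²)ⁿ are continuous with min_{i≠j,z} |f⁰_i(z) − f⁰_j(z)| ≥ 4ρ and min_{σ∈Sₙ} ∑_j |f_j(z) − f⁰_{σ(j)}(z)| ≤ ρ for every z ∈ (0,L). Then there exists a single permutation π ∈ Sₙ, independent of z, such that ∑_j |f_j(z) − f⁰_{π(j)}(z)| = min_{σ∈Sₙ} ∑_j |f_j(z) − f⁰_{σ(j)}(z)| for all z ∈ (0,L). -/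
noncomputable section

abbrev E2 := EuclideanSpace ℝ (Fin 2)

/-!
Write `F σ z = ∑ⱼ |f_j(z) − f⁰_{σ j}(z)|`. At every `z` a minimizing permutation pairs each
`f_j(z)` with a point `f⁰_{σ j}(z)` at distance at most `ρ`; since the `f⁰_i(z)` are more than
`2ρ` apart, this point is determined by `f_j(z)`, so the minimizer is unique. The set where a
fixed `σ` minimizes is closed by continuity of the `F τ`, and its complement is the finite union
of the (closed) sets where the other permutations minimize. Being clopen in the connected
interval, it is everything as soon as it is nonempty.
-/

section UniqueMinimizer

variable {X ι β : Type*} [TopologicalSpace X] [Finite ι]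
  [LinearOrder β] [TopologicalSpace β] [OrderClosedTopology β]

theorem exists_forall_le_of_preconnectedSpace_of_unique_min [PreconnectedSpace X] [Nonempty ι]
    (F : ι → X → β) (hF : ∀ i, Continuous (F i))
    (huniq : ∀ x i j, (∀ k, F i x ≤ F k x) → (∀ k, F j x ≤ F k x) → i = j) :
    ∃ i, ∀ x k, F i x ≤ F k x := by
  let minSet : ι → Set X := fun i => {x | ∀ k, F i x ≤ F k x}
  have hclosed (i : ι) : IsClosed (minSet i) := by
    simp only [minSet, Set.ofPred_forall]
    exact isClosed_iInter fun k => isClosed_le (hF i) (hF k)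
  have hcompl (i : ι) : (minSet i)ᶜ = ⋃ j : {j // j ≠ i}, minSet j := by
    ext x
    simp only [Set.mem_compl_iff, Set.mem_iUnion]
    constructor
    · intro hx
      obtain ⟨j, hj⟩ := Finite.exists_min fun k => F k x
      exact ⟨⟨j, fun hji => hx (hji ▸ hj)⟩, hj⟩
    · rintro ⟨⟨j, hji⟩, hj⟩ hi
      exact hji (huniq x j i hj hi)
  have hclopen (i : ι) : IsClopen (minSet i) :=
    ⟨hclosed i, by
      rw [← isClosed_compl_iff, hcompl]
      exact isClosed_iUnion_of_finite fun j => hclosed j⟩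
  cases isEmpty_or_nonempty X with
  | inl => exact ⟨Classical.arbitrary ι, fun x => isEmptyElim x⟩
  | inr =>
    obtain ⟨x₀⟩ := ‹Nonempty X›
    obtain ⟨i, hi⟩ := Finite.exists_min fun k => F k x₀
    have huniv : minSet i = Set.univ := (hclopen i).eq_univ ⟨x₀, hi⟩
    exact ⟨i, Set.eq_univ_iff_forall.mp huniv⟩

theorem IsPreconnected.exists_forall_le_of_unique_min [Nonempty ι] {S : Set X}
    (hS : IsPreconnected S) (F : ι → X → β) (hF : ∀ i, ContinuousOn (F i) S)
    (huniq : ∀ x ∈ S, ∀ i j, (∀ k, F i x ≤ F k x) → (∀ k, F j x ≤ F k x) → i = j) :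
    ∃ i, ∀ x ∈ S, ∀ k, F i x ≤ F k x := by
  have : PreconnectedSpace S := Subtype.preconnectedSpace hS
  obtain ⟨i, hi⟩ := exists_forall_le_of_preconnectedSpace_of_unique_min
    (fun k (x : S) => F k x) (fun k => (hF k).domRestrict) (fun x => huniq x x.2)
  exact ⟨i, fun x hx => hi ⟨x, hx⟩⟩

end UniqueMinimizer

theorem eq_of_sum_dist_le_of_separated {α ι κ : Type*} [PseudoMetricSpace α] [Fintype ι]
    {ρ : ℝ} {x : ι → α} {y : κ → α} (hsep : ∀ i j, i ≠ j → 2 * ρ < dist (y i) (y j))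
    {σ τ : ι → κ} (hσ : ∑ j, dist (x j) (y (σ j)) ≤ ρ) (hτ : ∑ j, dist (x j) (y (τ j)) ≤ ρ) :
    σ = τ := by
  have term_le {υ : ι → κ} (hυ : ∑ j, dist (x j) (y (υ j)) ≤ ρ) (j : ι) :
      dist (x j) (y (υ j)) ≤ ρ :=
    (Finset.single_le_sum (f := fun i => dist (x i) (y (υ i))) (fun i _ => dist_nonneg)
      (Finset.mem_univ j)).trans hυ
  funext j
  by_contra hne
  have := dist_triangle_left (y (σ j)) (y (τ j)) (x j)
  linarith [hsep _ _ hne, term_le hσ j, term_le hτ j]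

theorem stmt16_general (n : ℕ) (ρ L : ℝ) (hρ : 0 < ρ)
    (f f0 : Fin n → ℝ → E2)
    (hf : ∀ j, ContinuousOn (f j) (Set.Ioo 0 L))
    (hf0 : ∀ j, ContinuousOn (f0 j) (Set.Ioo 0 L))
    (hsep : ∀ z ∈ Set.Ioo 0 L, ∀ i j, i ≠ j → 4 * ρ ≤ dist (f0 i z) (f0 j z))
    (hclose : ∀ z ∈ Set.Ioo 0 L,
      (⨅ σ : Equiv.Perm (Fin n), ∑ j, dist (f j z) (f0 (σ j) z)) ≤ ρ) :
    ∃ p : Equiv.Perm (Fin n), ∀ z ∈ Set.Ioo 0 L,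
      ∑ j, dist (f j z) (f0 (p j) z)
        = ⨅ σ : Equiv.Perm (Fin n), ∑ j, dist (f j z) (f0 (σ j) z) := by
  set F : Equiv.Perm (Fin n) → ℝ → ℝ := fun σ z => ∑ j, dist (f j z) (f0 (σ j) z)
  have hbdd (z : ℝ) : BddBelow (Set.range fun σ => F σ z) := (Set.finite_range _).bddBelow
  have hcont (σ : Equiv.Perm (Fin n)) : ContinuousOn (F σ) (Set.Ioo 0 L) :=
    continuousOn_finsetSum _ fun j _ =>
      continuous_dist.comp_continuousOn ((hf j).prodMk (hf0 (σ j)))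
  have huniq : ∀ z ∈ Set.Ioo 0 L, ∀ σ τ,
      (∀ υ, F σ z ≤ F υ z) → (∀ υ, F τ z ≤ F υ z) → σ = τ := by
    intro z hz σ τ hσ hτ
    have hsep' (i j : Fin n) (hij : i ≠ j) : 2 * ρ < dist (f0 i z) (f0 j z) := by
      linarith [hsep z hz i j hij]
    exact DFunLike.coe_injective <| eq_of_sum_dist_le_of_separated hsep'
      ((le_ciInf hσ).trans (hclose z hz)) ((le_ciInf hτ).trans (hclose z hz))
  obtain ⟨p, hp⟩ := isPreconnected_Ioo.exists_forall_le_of_unique_min F hcont huniq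
  exact ⟨p, fun z hz => le_antisymm (le_ciInf (hp z hz)) (ciInf_le (hbdd z) p)⟩

/-- if the reference configuration `f⁰` is `4ρ`-separated and the matching
distance between `f` and `f⁰` is at most `ρ` at every `z ∈ (0,L)`, then a single
permutation, independent of `z`, realizes the minimal matching for all `z`. -/
theorem stmt16 (n : ℕ) (ρ L : ℝ) (hρ : 0 < ρ) (hL : 0 < L)
    (f f0 : Fin n → ℝ → E2)
    (hf : ∀ j, ContinuousOn (f j) (Set.Ioo 0 L))
    (hf0 : ∀ j, ContinuousOn (f0 j) (Set.Ioo 0 L))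
    (hsep : ∀ z ∈ Set.Ioo 0 L, ∀ i j, i ≠ j → 4 * ρ ≤ dist (f0 i z) (f0 j z))
    (hclose : ∀ z ∈ Set.Ioo 0 L,
      (⨅ σ : Equiv.Perm (Fin n), ∑ j, dist (f j z) (f0 (σ j) z)) ≤ ρ) :
    ∃ p : Equiv.Perm (Fin n), ∀ z ∈ Set.Ioo 0 L,
      ∑ j, dist (f j z) (f0 (p j) z)
        = ⨅ σ : Equiv.Perm (Fin n), ∑ j, dist (f j z) (f0 (σ j) z) :=
  stmt16_general n ρ L hρ f f0 hf hf0 hsep hclose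
end
end
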